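/- For m ∈ (0,1), the function g_m(E) = (2π√(m(1-m)))^{-1} · E^{-1/2 - (i/(2π)) ln((1-m)/m)} on ℝ^+ is a generalized eigenfunction of the integral operator with kernel -(1/(2πi)) · 1/(E - E' + i0^+); that is, -(1/(2πi)) ∫_0^∞ g_m(E')/(E - E' + i0^+) dE' = m · g_m(E) for E > 0 (in the distributional sense). -/

import Mathlib

open MeasureTheory Complex Filter Set
open scoped Real ComplexOrder

noncomputable section

/-- The Hilbert space `L²(ℝ; ℂ)`. -/
abbrev Hsp : Type := Lp ℂ 2 (volume : Measure ℝ)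

/-- The set of boundary values on `ℝ` of Hardy-class functions analytic in the
upper half-plane (with uniformly bounded `L²` norms on horizontal lines, attaining the
given boundary value in the `L²` sense). -/
def hardySet : Set Hsp :=
  {g | ∃ F : ℂ → ℂ,
    DifferentiableOn ℂ F {z : ℂ | 0 < z.im} ∧
    (∃ C : ℝ, ∀ b : ℝ, 0 < b → (∫ a : ℝ, ‖F ((a : ℂ) + (b : ℂ) * I)‖ ^ 2) ≤ C) ∧
    Tendsto (fun b : ℝ => ∫ a : ℝ, ‖F ((a : ℂ) + (b : ℂ) * I) - g a‖ ^ 2)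
      (nhdsWithin 0 (Ioi 0)) (nhds 0)}

/-- The Hardy space `H²₊(ℝ; ℂ)` as a closed subspace of `L²(ℝ; ℂ)`. -/
def hardySubmodule : Submodule ℂ Hsp := (Submodule.span ℂ hardySet).topologicalClosure

instance : CompleteSpace hardySubmodule :=
  (Submodule.isClosed_topologicalClosure (Submodule.span ℂ hardySet)).completeSpace_coe

/-- The orthogonal projection `P₊` of `L²(ℝ; ℂ)` onto the Hardy space `H²₊(ℝ; ℂ)`. -/
def Pplus : Hsp →L[ℂ] Hsp := hardySubmodule.subtypeL.comp (hardySubmodule.orthogonalProjectionOnto)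

/-- The set of elements of `L²(ℝ; ℂ)` supported (a.e.) on `ℝ⁺`. -/
def posSuppSet : Set Hsp := {f | ∀ᵐ x : ℝ, x ≤ 0 → f x = 0}

/-- `L²(ℝ⁺; ℂ)` as a closed subspace of `L²(ℝ; ℂ)`. -/
def posSupp : Submodule ℂ Hsp := (Submodule.span ℂ posSuppSet).topologicalClosure

instance : CompleteSpace posSupp :=
  (Submodule.isClosed_topologicalClosure (Submodule.span ℂ posSuppSet)).completeSpace_coe

/-- The orthogonal projection `P_{ℝ⁺}` of `L²(ℝ; ℂ)` onto `L²(ℝ⁺; ℂ)`. -/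
def PposL : Hsp →L[ℂ] Hsp := posSupp.subtypeL.comp (posSupp.orthogonalProjectionOnto)

/-- The Lyapunov operator `M = P_{ℝ⁺} P₊ P_{ℝ⁺}` on `L²(ℝ; ℂ)`. -/
def Mop : Hsp →L[ℂ] Hsp := PposL.comp (Pplus.comp PposL)

/-- The Lyapunov operator `M = (P_{ℝ⁺} P₊ P_{ℝ⁺})|_{L²(ℝ⁺;ℂ)}` on `L²(ℝ⁺; ℂ)`. -/
def Msub : posSupp →L[ℂ] posSupp :=
  (posSupp.orthogonalProjectionOnto).comp (Pplus.comp posSupp.subtypeL)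

lemma memU (t : ℝ) (ψ : Hsp) :
    MemLp (fun x : ℝ => Complex.exp (-(I * (x : ℂ) * (t : ℂ))) * ψ x) 2 volume := by
  have hm : AEStronglyMeasurable (fun x : ℝ => Complex.exp (-(I * (x : ℂ) * (t : ℂ)))) volume := by
    apply Continuous.aestronglyMeasurable
    continuity
  refine MemLp.of_le (Lp.memLp ψ) (hm.mul (Lp.aestronglyMeasurable ψ)) ?_
  filter_upwards with x
  have : ‖Complex.exp (-(I * (x : ℂ) * (t : ℂ)))‖ = 1 := by
    rw [Complex.norm_exp]
    simp
  rw [norm_mul, this, one_mul]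

/-- The unitary evolution `U(t)`: `(U(t)ψ)(E) = e^{-iEt} ψ(E)`. -/
def U (t : ℝ) (ψ : Hsp) : Hsp := (memU t ψ).toLp _


/-- The complex exponent `β(m) = -1/2 - (i/(2π)) ln((1-m)/m)`. -/
def betaExp (m : ℝ) : ℂ := -(1/2) - (I / (2 * (π : ℂ))) * (Real.log ((1 - m) / m) : ℂ)

/-- The generalized eigenfunction `g_m(E) = (2π√(m(1-m)))⁻¹ E^{β(m)}`. -/
def gm (m : ℝ) (E : ℝ) : ℂ :=
  (1 / (2 * (π : ℂ) * (Real.sqrt (m * (1 - m)) : ℂ))) * (E : ℂ) ^ betaExp m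

namespace Stmt9Aux



lemma norm_cpow_of_pos {β : ℂ} {x : ℝ} (hx : 0 < x) : ‖(x:ℂ) ^ β‖ = x ^ (β.re) := by
  rw [Complex.norm_cpow_eq_rpow_re_of_pos hx]

/-- key lower bound for the denominator, locally uniform in `w`. -/
lemma denom_lower_bound {w₀ : ℂ} (hw₀ : w₀ ∈ Complex.slitPlane) :
    ∃ ε > 0, ∃ c > 0, Metric.ball w₀ ε ⊆ Complex.slitPlane ∧
      ∀ x : ℝ, 0 ≤ x → ∀ w ∈ Metric.ball w₀ ε, c * max 1 x ≤ ‖(x:ℂ) + w‖ := by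
  obtain ⟨r, hr, hball⟩ := Metric.isOpen_iff.1 Complex.isOpen_slitPlane w₀ hw₀
  set T : ℝ := max 1 (2 * ‖w₀‖) with hT
  have hT1 : (1:ℝ) ≤ T := le_max_left _ _
  have hcont : ContinuousOn (fun x : ℝ => ‖(x:ℂ) + w₀‖) (Set.Icc 0 T) := by fun_prop
  obtain ⟨x₀, hx₀, hmin⟩ := (isCompact_Icc (a := (0:ℝ)) (b := T)).exists_isMinOn
    (Set.nonempty_Icc.2 (by linarith)) hcont
  have hδ : 0 < ‖(x₀:ℂ) + w₀‖ := by
    rw [norm_pos_iff]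
    intro h
    have hww : w₀ = -(x₀:ℂ) := by linear_combination h
    rw [hww] at hw₀
    rcases hw₀ with h | h
    · simp only [Complex.neg_re, Complex.ofReal_re] at h; linarith [hx₀.1]
    · simp at h
  set δ : ℝ := ‖(x₀:ℂ) + w₀‖ with hδdef
  set c₀ : ℝ := min (δ / T) (1/2) with hc₀
  have hc₀pos : 0 < c₀ := lt_min (div_pos hδ (by linarith)) (by norm_num)
  have hbase : ∀ x : ℝ, 0 ≤ x → c₀ * max 1 x ≤ ‖(x:ℂ) + w₀‖ := by
    intro x hx
    rcases le_total x T with hxT | hxT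
    · have h1 : max 1 x ≤ T := max_le hT1 hxT
      have h2 : c₀ * max 1 x ≤ (δ / T) * T := by
        apply mul_le_mul (min_le_left _ _) h1 (by positivity)
        positivity
      rw [div_mul_cancel₀ _ (by linarith : T ≠ 0)] at h2
      exact h2.trans (hmin ⟨hx, hxT⟩)
    · have hx1 : (1:ℝ) ≤ x := hT1.trans hxT
      have hmax : max 1 x = x := max_eq_right hx1
      have hge : x - ‖w₀‖ ≤ ‖(x:ℂ) + w₀‖ := by
        have := norm_add_le ((x:ℂ) + w₀) (-w₀)
        simp only [add_neg_cancel_right, norm_neg, Complex.norm_real,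
          Real.norm_eq_abs, _root_.abs_of_nonneg hx] at this
        linarith
      have h2w : 2 * ‖w₀‖ ≤ x := (le_max_right _ _).trans hxT
      have : c₀ * max 1 x ≤ (1/2) * x := by
        rw [hmax]
        exact mul_le_mul_of_nonneg_right (min_le_right _ _) hx
      linarith
  refine ⟨min r (c₀ / 2), lt_min hr (by positivity), c₀ / 2, by positivity,
    fun w hw => hball (Metric.ball_subset_ball (min_le_left _ _) hw), ?_⟩
  intro x hx w hw
  have hdist : ‖w - w₀‖ < c₀ / 2 := by
    have := Metric.mem_ball.1 hw
    rw [dist_eq_norm] at this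
    exact this.trans_le (min_le_right _ _)
  have hmax1 : (1:ℝ) ≤ max 1 x := le_max_left _ _
  have hge : ‖(x:ℂ) + w₀‖ - ‖w - w₀‖ ≤ ‖(x:ℂ) + w‖ := by
    have := norm_add_le ((x:ℂ) + w) (w₀ - w)
    have heq : (x:ℂ) + w + (w₀ - w) = (x:ℂ) + w₀ := by ring
    rw [heq] at this
    rw [← norm_neg (w - w₀)]
    simp only [neg_sub]
    linarith
  have := hbase x hx
  nlinarith [hc₀pos, hmax1]



lemma integrable_model {p : ℝ} (hp : 1/2 < p) :
    IntegrableOn (fun x : ℝ => x ^ (-(1/2):ℝ) * (max 1 x) ^ (-p)) (Ioi 0) := by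
  have h1 : IntegrableOn (fun x : ℝ => x ^ (-(1/2):ℝ) * (max 1 x) ^ (-p)) (Ioc 0 1) := by
    have hbase : IntegrableOn (fun x : ℝ => x ^ (-(1/2):ℝ)) (Ioc 0 1) := by
      have := intervalIntegral.intervalIntegrable_rpow' (a := 0) (b := 1)
        (r := -(1/2)) (by norm_num)
      rwa [intervalIntegrable_iff_integrableOn_Ioc_of_le (by norm_num)] at this
    apply hbase.congr_fun ?_ measurableSet_Ioc
    intro x hx
    simp only
    rw [max_eq_left hx.2, Real.one_rpow, mul_one]
  have h2 : IntegrableOn (fun x : ℝ => x ^ (-(1/2):ℝ) * (max 1 x) ^ (-p)) (Ioi 1) := by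
    have hbase : IntegrableOn (fun x : ℝ => x ^ (-(1/2) + -p : ℝ)) (Ioi 1) :=
      integrableOn_Ioi_rpow_of_lt (by linarith) one_pos
    apply hbase.congr_fun ?_ measurableSet_Ioi
    intro x hx
    simp only
    rw [max_eq_right (le_of_lt hx), Real.rpow_add (lt_trans one_pos hx)]
  have := h1.union h2
  rwa [Ioc_union_Ioi_eq_Ioi (by norm_num : (0:ℝ) ≤ 1)] at this



lemma mem_slitPlane_add {w : ℂ} (hw : w ∈ Complex.slitPlane) {x : ℝ} (hx : 0 ≤ x) :
    (x:ℂ) + w ≠ 0 := by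
  intro h0
  have hww : w = -(x:ℂ) := by linear_combination h0
  rw [hww] at hw
  rcases hw with h | h
  · simp only [Complex.neg_re, Complex.ofReal_re] at h; linarith
  · simp at h

lemma kernel_contOn {β : ℂ} {w : ℂ} (hw : ∀ x : ℝ, 0 ≤ x → (x:ℂ) + w ≠ 0) (n : ℕ) :
    ContinuousOn (fun x : ℝ => (x:ℂ) ^ β / ((x:ℂ) + w) ^ n) (Ioi 0) := by
  apply ContinuousOn.div
  · intro x hx
    exact (Complex.continuousAt_ofReal_cpow_const x β
      (Or.inr (ne_of_gt hx))).continuousWithinAt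
  · fun_prop
  · intro x hx
    exact pow_ne_zero n (hw x (le_of_lt hx))

lemma kernel_norm_le {β : ℂ} (hβ : β.re = -(1/2)) {w : ℂ} {c x : ℝ} (hc : 0 < c)
    (hx : 0 < x) (hlow : c * max 1 x ≤ ‖(x:ℂ) + w‖) (n : ℕ) :
    ‖(x:ℂ) ^ β / ((x:ℂ) + w) ^ n‖ ≤
      (c ^ n)⁻¹ * (x ^ (-(1/2):ℝ) * (max 1 x) ^ (-(n:ℝ))) := by
  have hmaxpos : (0:ℝ) < max 1 x := lt_of_lt_of_le one_pos (le_max_left _ _)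
  have hnorm : ‖(x:ℂ) ^ β / ((x:ℂ) + w) ^ n‖ = x ^ (-(1/2):ℝ) / ‖(x:ℂ) + w‖ ^ n := by
    rw [norm_div, norm_pow, Complex.norm_cpow_eq_rpow_re_of_pos hx, hβ]
  rw [hnorm]
  have hrw : (c ^ n)⁻¹ * (x ^ (-(1/2):ℝ) * (max 1 x) ^ (-(n:ℝ))) =
      x ^ (-(1/2):ℝ) / (c * max 1 x) ^ n := by
    rw [Real.rpow_neg hmaxpos.le, Real.rpow_natCast, mul_pow]
    field_simp
  rw [hrw]
  have hcm : 0 < c * max 1 x := by positivity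
  gcongr

/-- The function `B(w) = ∫_0^∞ x^β/(x+w) dx`. -/
def Bfun (β : ℂ) (w : ℂ) : ℂ := ∫ x in Ioi (0:ℝ), (x:ℂ) ^ β / ((x:ℂ) + w)






lemma integrableOn_kernel {β : ℂ} (hβ : β.re = -(1/2)) {w : ℂ} {c : ℝ} (hc : 0 < c)
    (hlow : ∀ x : ℝ, 0 ≤ x → c * max 1 x ≤ ‖(x:ℂ) + w‖) {n : ℕ} (hn : n ≠ 0)
    (hne : ∀ x : ℝ, 0 ≤ x → (x:ℂ) + w ≠ 0) :
    IntegrableOn (fun x : ℝ => (x:ℂ) ^ β / ((x:ℂ) + w) ^ n) (Ioi 0) := by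
  have hmeas : AEStronglyMeasurable (fun x : ℝ => (x:ℂ) ^ β / ((x:ℂ) + w) ^ n)
      (volume.restrict (Ioi 0)) :=
    (kernel_contOn hne n).aestronglyMeasurable measurableSet_Ioi
  have hn1 : (1:ℝ) ≤ (n:ℝ) := by exact_mod_cast Nat.one_le_iff_ne_zero.mpr hn
  refine Integrable.mono' ((integrable_model (p := (n:ℝ)) (by linarith)).const_mul
      ((c ^ n)⁻¹)) hmeas ?_
  rw [ae_restrict_iff' measurableSet_Ioi]
  filter_upwards with x hx
  exact kernel_norm_le hβ hc hx (hlow x (le_of_lt hx)) n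

lemma Bfun_differentiableAt {β : ℂ} (hβ : β.re = -(1/2)) {w₀ : ℂ}
    (hw₀ : w₀ ∈ Complex.slitPlane) : DifferentiableAt ℂ (Bfun β) w₀ := by
  obtain ⟨ε, hε, c, hc, hsub, hlow⟩ := denom_lower_bound hw₀
  have key := hasDerivAt_integral_of_dominated_loc_of_deriv_le (μ := volume.restrict (Ioi 0))
    (F := fun w (x : ℝ) => (x:ℂ) ^ β / ((x:ℂ) + w))
    (F' := fun w (x : ℝ) => -((x:ℂ) ^ β / ((x:ℂ) + w) ^ 2))
    (x₀ := w₀)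
    (bound := fun x : ℝ => (c ^ 2)⁻¹ * (x ^ (-(1/2):ℝ) * (max 1 x) ^ (-((2:ℕ):ℝ))))
    (Metric.ball_mem_nhds w₀ hε) ?_ ?_ ?_ ?_ ?_ ?_
  · exact key.2.differentiableAt
  · filter_upwards [Metric.ball_mem_nhds w₀ hε] with w hw
    have := (kernel_contOn (β := β) (fun x hx => mem_slitPlane_add (hsub hw) hx) 1).aestronglyMeasurable (μ := volume) measurableSet_Ioi
    simpa [pow_one] using this
  · have := integrableOn_kernel hβ hc (fun x hx => hlow x hx w₀ (Metric.mem_ball_self hε))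
      (n := 1) one_ne_zero (fun x hx => mem_slitPlane_add (hsub (Metric.mem_ball_self hε)) hx)
    simpa [pow_one, IntegrableOn] using this
  · exact ((kernel_contOn (β := β) (fun x hx => mem_slitPlane_add (hsub (Metric.mem_ball_self hε)) hx)
      2).aestronglyMeasurable (μ := volume) measurableSet_Ioi).neg
  · rw [ae_restrict_iff' measurableSet_Ioi]
    filter_upwards with x hx
    intro w hw
    rw [norm_neg]
    exact kernel_norm_le hβ hc hx (hlow x (le_of_lt hx) w hw) 2
  · exact (integrable_model (p := ((2:ℕ):ℝ)) (by norm_num)).const_mul _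
  · rw [ae_restrict_iff' measurableSet_Ioi]
    filter_upwards with x hx
    intro w hw
    have hne : (x:ℂ) + w ≠ 0 := mem_slitPlane_add (hsub hw) (le_of_lt hx)
    have h1 : HasDerivAt (fun w : ℂ => (x:ℂ) + w) 1 w := by
      simpa using (hasDerivAt_id w).const_add (x:ℂ)
    have h2 := (hasDerivAt_const w ((x:ℂ) ^ β)).div h1 hne
    exact h2.congr_deriv (by ring)



lemma isPreconnected_slitPlane : IsPreconnected Complex.slitPlane := by
  have h : IsPathConnected Complex.slitPlane :=
    ⟨1, Complex.one_mem_slitPlane, fun y hy =>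
      JoinedIn.of_segment_subset (Complex.starConvex_one_slitPlane.segment_subset hy)⟩
  exact h.isConnected.isPreconnected

lemma Bfun_real {β : ℂ} (hβ : β.re = -(1/2)) {a : ℝ} (ha : 0 < a) :
    Bfun β a = (a:ℂ) ^ β * Bfun β 1 := by
  have ha' : (a:ℂ) ≠ 0 := by exact_mod_cast ne_of_gt ha
  have h := integral_comp_mul_left_Ioi
    (g := fun y : ℝ => ((y:ℂ)) ^ β / ((y:ℂ) + (a:ℂ))) 0 ha
  rw [mul_zero] at h
  have hL : (∫ x in Ioi (0:ℝ), ((a * x : ℝ):ℂ) ^ β / (((a * x : ℝ):ℂ) + (a:ℂ)))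
      = ((a:ℂ) ^ β / (a:ℂ)) * Bfun β 1 := by
    rw [Bfun, ← MeasureTheory.integral_const_mul]
    apply setIntegral_congr_fun measurableSet_Ioi
    intro x hx
    have hx0 : (0:ℝ) < x := hx
    have hcast : ((a * x : ℝ):ℂ) = (a:ℂ) * (x:ℂ) := by push_cast; ring
    have hpow : ((a:ℂ) * (x:ℂ)) ^ β = (a:ℂ) ^ β * (x:ℂ) ^ β :=
      Complex.mul_cpow_ofReal_nonneg ha.le hx0.le β
    have hx1 : (x:ℂ) + 1 ≠ 0 := mem_slitPlane_add Complex.one_mem_slitPlane hx0.le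
    have hax : (a:ℂ) + (a:ℂ) * (x:ℂ) ≠ 0 := by
      rw [show (a:ℂ) + (a:ℂ) * (x:ℂ) = (a:ℂ) * (1 + (x:ℂ)) by ring]
      refine mul_ne_zero ha' ?_
      rw [show (1:ℂ) + (x:ℂ) = ((1 + x : ℝ) : ℂ) by push_cast; ring]
      exact_mod_cast ne_of_gt (by positivity : (0:ℝ) < 1 + x)
    simp only [hcast, hpow]
    rw [div_mul_div_comm, show (a:ℂ) * (x:ℂ) + (a:ℂ) = (a:ℂ) * ((x:ℂ) + 1) by ring]
  rw [hL] at h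
  have hBa : (∫ x in Ioi (0:ℝ), (x:ℂ) ^ β / ((x:ℂ) + (a:ℂ))) = Bfun β a := rfl
  rw [hBa, real_smul, Complex.ofReal_inv] at h
  field_simp at h
  exact h.symm

lemma Bfun_eq_of_mem {β : ℂ} (hβ : β.re = -(1/2)) {w : ℂ} (hw : w ∈ Complex.slitPlane) :
    Bfun β w = w ^ β * Bfun β 1 := by
  have hdiff : DifferentiableOn ℂ (Bfun β) Complex.slitPlane :=
    fun w hw => (Bfun_differentiableAt hβ hw).differentiableWithinAt
  have h1 : AnalyticOnNhd ℂ (Bfun β) Complex.slitPlane :=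
    hdiff.analyticOnNhd Complex.isOpen_slitPlane
  have h2 : AnalyticOnNhd ℂ (fun w : ℂ => w ^ β * Bfun β 1) Complex.slitPlane := by
    apply DifferentiableOn.analyticOnNhd _ Complex.isOpen_slitPlane
    intro z hz
    exact (((differentiableAt_id).cpow (differentiableAt_const β) hz).mul
      (differentiableAt_const _)).differentiableWithinAt
  have hseq : Tendsto (fun n : ℕ => ((1 + ((n:ℝ)+1)⁻¹ : ℝ) : ℂ)) atTop (nhdsWithin 1 {(1:ℂ)}ᶜ) := by
    rw [tendsto_nhdsWithin_iff]
    constructor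
    · have hr : Tendsto (fun n : ℕ => (1 + ((n:ℝ)+1)⁻¹ : ℝ)) atTop (nhds 1) := by
        have := tendsto_one_div_add_atTop_nhds_zero_nat (𝕜 := ℝ)
        simp only [one_div] at this
        simpa using tendsto_const_nhds.add this
      have := Complex.continuous_ofReal.continuousAt.tendsto.comp hr
      exact this
    · filter_upwards with n
      simp only [mem_compl_iff, mem_singleton_iff]
      intro hcontr
      have : (1 + ((n:ℝ)+1)⁻¹ : ℝ) = 1 := by exact_mod_cast hcontr
      have hpos : (0:ℝ) < ((n:ℝ)+1)⁻¹ := by positivity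
      linarith
  have hfreq : ∃ᶠ z in nhdsWithin 1 {(1:ℂ)}ᶜ, Bfun β z = z ^ β * Bfun β 1 := by
    apply hseq.frequently
    apply Frequently.of_forall
    intro n
    exact Bfun_real hβ (by positivity)
  exact h1.eqOn_of_preconnected_of_frequently_eq h2 isPreconnected_slitPlane
    Complex.one_mem_slitPlane hfreq hw

lemma K_val {β : ℂ} (hβ : β.re = -(1/2)) :
    Bfun β 1 = (π:ℂ) / Complex.sin (π * (β+1)) := by
  have himg : (fun u : ℝ => u / (1-u)) '' Ioo 0 1 = Ioi (0:ℝ) := by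
    ext y
    simp only [mem_image, mem_Ioi]
    constructor
    · rintro ⟨u, ⟨hu0, hu1⟩, rfl⟩
      have : (0:ℝ) < 1 - u := by linarith
      positivity
    · intro hy
      have h1y : (0:ℝ) < 1 + y := by linarith
      refine ⟨y / (1+y), ⟨by positivity, ?_⟩, ?_⟩
      · rw [div_lt_one h1y]; linarith
      · field_simp; ring
  have hderiv : ∀ u ∈ Ioo (0:ℝ) 1,
      HasDerivWithinAt (fun u : ℝ => u / (1-u)) (((1-u)^2)⁻¹) (Ioo 0 1) u := by
    intro u hu
    have h1u : (0:ℝ) < 1 - u := by linarith [hu.2]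
    have hne : (1:ℝ) - u ≠ 0 := ne_of_gt h1u
    have hd := (hasDerivAt_id u).div ((hasDerivAt_const u 1).sub (hasDerivAt_id u)) hne
    simp only [id_eq, Pi.sub_apply] at hd
    rw [show (1 * (1 - u) - u * (0 - 1)) / (1 - u) ^ 2 = ((1-u)^2)⁻¹ from by field_simp; ring] at hd
    exact hd.hasDerivWithinAt
  have hinj : InjOn (fun u : ℝ => u / (1-u)) (Ioo 0 1) := by
    intro u hu v hv h
    have h1u : (1:ℝ) - u ≠ 0 := ne_of_gt (by linarith [hu.2])
    have h1v : (1:ℝ) - v ≠ 0 := ne_of_gt (by linarith [hv.2])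
    field_simp at h
    nlinarith [h]
  have hchg := integral_image_eq_integral_abs_deriv_smul measurableSet_Ioo hderiv hinj
    (fun x : ℝ => (x:ℂ) ^ β / ((x:ℂ) + 1))
  rw [himg] at hchg
  have hptwise : ∀ u ∈ Ioo (0:ℝ) 1,
      |((1-u)^2)⁻¹| • ((((u / (1-u) : ℝ)):ℂ) ^ β / ((((u / (1-u) : ℝ)):ℂ) + 1))
        = (u:ℂ) ^ β * ((1:ℂ) - (u:ℂ)) ^ (-β-1) := by
    intro u hu
    have hu0 : (0:ℝ) < u := hu.1
    have h1u : (0:ℝ) < 1 - u := by linarith [hu.2]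
    have hne : (1:ℝ) - u ≠ 0 := ne_of_gt h1u
    have hzne : ((1 - u : ℝ):ℂ) ≠ 0 := by exact_mod_cast hne
    have hdenR : (u / (1-u) : ℝ) + 1 = (1-u)⁻¹ := by field_simp; ring
    have hden : (((u / (1-u) : ℝ)):ℂ) + 1 = ((((1-u)⁻¹ : ℝ)):ℂ) := by
      exact_mod_cast congrArg (fun t : ℝ => (t:ℂ)) hdenR
    have hsplit : (u / (1-u) : ℝ) = u * (1-u)⁻¹ := div_eq_mul_inv _ _
    have hpow : (((u / (1-u) : ℝ)):ℂ) ^ β = (u:ℂ) ^ β * ((((1-u)⁻¹ : ℝ)):ℂ) ^ β := by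
      rw [hsplit, Complex.ofReal_mul]
      exact Complex.mul_cpow_ofReal_nonneg hu0.le (inv_nonneg.mpr h1u.le) β
    have harg : ((1 - u : ℝ):ℂ).arg ≠ π := by
      rw [Complex.arg_ofReal_of_nonneg h1u.le]
      exact Real.pi_ne_zero.symm
    have hinvpow : ((((1-u)⁻¹ : ℝ)):ℂ) ^ β = ((1 - u : ℝ):ℂ) ^ (-β) := by
      rw [Complex.ofReal_inv, Complex.inv_cpow _ _ harg, ← Complex.cpow_neg]
    rw [hden, hpow, hinvpow, abs_of_pos (by positivity : (0:ℝ) < ((1-u)^2)⁻¹), real_smul]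
    have hcas : ((1:ℂ) - (u:ℂ)) = ((1 - u : ℝ):ℂ) := by push_cast; ring
    rw [hcas, show -β-1 = -β + (-1) by ring, Complex.cpow_add _ _ hzne, Complex.cpow_neg_one]
    push_cast
    have hz2 : ((1:ℂ) - (u:ℂ)) ≠ 0 := by
      rw [hcas]; exact hzne
    field_simp
  rw [setIntegral_congr_fun measurableSet_Ioo hptwise] at hchg
  have hbeta : Complex.betaIntegral (β+1) (-β)
      = ∫ u in Ioo (0:ℝ) 1, (u:ℂ) ^ β * ((1:ℂ) - (u:ℂ)) ^ (-β-1) := by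
    rw [Complex.betaIntegral, intervalIntegral.integral_of_le zero_le_one,
      MeasureTheory.integral_Ioc_eq_integral_Ioo]
    apply setIntegral_congr_fun measurableSet_Ioo
    intro u hu
    simp only
    rw [show β + 1 - 1 = β by ring, show -β - 1 = -β - 1 by ring]
  have h1 : 0 < (β+1).re := by
    simp only [Complex.add_re, Complex.one_re, hβ]; norm_num
  have h2 : 0 < (-β).re := by
    simp only [Complex.neg_re, hβ]; norm_num
  have hGamma := Complex.Gamma_mul_Gamma_eq_betaIntegral h1 h2
  rw [show β + 1 + -β = 1 by ring, Complex.Gamma_one, one_mul] at hGamma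
  have hrefl := Complex.Gamma_mul_Gamma_one_sub (β+1)
  rw [show (1:ℂ) - (β+1) = -β by ring] at hrefl
  rw [Bfun, hchg, ← hbeta, ← hGamma, hrefl]



lemma betaExp_re (m : ℝ) : (betaExp m).re = -(1/2) := by
  have hπ : (π:ℝ) ≠ 0 := Real.pi_ne_zero
  have h : betaExp m = -(1/2) - (↑(Real.log ((1 - m) / m) / (2*π)) : ℂ) * I := by
    rw [betaExp]
    push_cast
    field_simp
  rw [h]
  simp only [Complex.sub_re, Complex.mul_re, Complex.ofReal_re, Complex.ofReal_im,
    Complex.I_re, Complex.I_im, Complex.neg_re, Complex.one_re, Complex.div_re]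
  norm_num

lemma final_id {m : ℝ} (hm : m ∈ Ioo (0:ℝ) 1) {E : ℝ} (hE : 0 < E) :
    (1/(2*(π:ℂ)*I)) * ((π:ℂ) / Complex.sin ((π:ℂ) * (betaExp m + 1))) *
      Complex.exp (((Real.log E : ℂ) - (π:ℂ)*I) * betaExp m)
    = (m:ℂ) * (E:ℂ) ^ (betaExp m) := by
  obtain ⟨hm0, hm1⟩ := hm
  set t : ℝ := Real.log ((1 - m) / m) with ht
  set β : ℂ := betaExp m with hβ
  have hβdef : β = -(1/2) - (I / (2 * (π : ℂ))) * (t : ℂ) := rfl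
  have hπ : (π:ℂ) ≠ 0 := by exact_mod_cast Real.pi_ne_zero
  have hEne : (E:ℂ) ≠ 0 := by exact_mod_cast ne_of_gt hE
  have hsplit : Complex.exp (((Real.log E : ℂ) - (π:ℂ)*I) * β)
      = (E:ℂ) ^ β * Complex.exp (-((π:ℂ)*I*β)) := by
    rw [Complex.cpow_def_of_ne_zero hEne, ← Complex.exp_add, ← Complex.ofReal_log hE.le]
    congr 1
    ring
  have h1 : -((π:ℂ)*I*β) = (↑(-(t/2)) : ℂ) + (↑(π/2):ℂ) * I := by
    rw [hβdef]
    push_cast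
    field_simp
    ring_nf
    rw [Complex.I_sq]
    ring
  have hexpval : Complex.exp (-((π:ℂ)*I*β)) = ↑(Real.exp (-(t/2))) * I := by
    rw [h1, Complex.exp_add, Complex.exp_mul_I, Complex.ofReal_exp]
    rw [← Complex.ofReal_cos, ← Complex.ofReal_sin, Real.cos_pi_div_two, Real.sin_pi_div_two]
    simp
  have h2 : (π:ℂ) * (β + 1) = (π:ℂ)/2 - (↑(t/2):ℂ) * I := by
    rw [hβdef]
    push_cast
    field_simp
    ring_nf
  have hsin : Complex.sin ((π:ℂ) * (β + 1)) = ↑(Real.cosh (t/2)) := by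
    rw [h2, Complex.sin_pi_div_two_sub, Complex.cos_mul_I, Complex.ofReal_cosh]
  -- real identity
  have hApos : 0 < Real.exp (t/2) := Real.exp_pos _
  have hAB : Real.exp (t/2) * Real.exp (-(t/2)) = 1 := by
    rw [← Real.exp_add]; simp
  have hAA : m * (Real.exp (t/2) * Real.exp (t/2)) = 1 - m := by
    rw [← Real.exp_add, show t/2 + t/2 = t by ring, ht,
      Real.exp_log (div_pos (by linarith) hm0)]
    field_simp
  have hkey : Real.exp (-(t/2)) - m * (Real.exp (t/2) + Real.exp (-(t/2))) = 0 := by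
    apply mul_left_cancel₀ (ne_of_gt hApos)
    rw [mul_zero]
    linear_combination (1 - m) * hAB - hAA
  have hreal : Real.exp (-(t/2)) = m * (2 * Real.cosh (t/2)) := by
    rw [Real.cosh_eq]
    ring_nf
    ring_nf at hkey
    linarith
  have hcoshne : ((Real.cosh (t/2) : ℝ) : ℂ) ≠ 0 := by
    exact_mod_cast ne_of_gt (Real.cosh_pos (t/2))
  rw [hsplit, hexpval, hsin, hreal]
  push_cast
  field_simp
  have hC : Complex.cosh ((t:ℂ)/2) ≠ 0 := by
    rw [show ((t:ℂ)/2) = ((t/2 : ℝ):ℂ) by push_cast; ring, ← Complex.ofReal_cosh]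
    exact_mod_cast hcoshne
  exact mul_div_cancel_left₀ _ hC

end Stmt9Aux

/-- For `m ∈ (0,1)`, the function `g_m` is a generalized eigenfunction of the integral
operator with kernel `-(1/(2πi)) (E - E' + i0⁺)⁻¹`, with eigenvalue `m`. -/
theorem stmt9 (m : ℝ) (hm : m ∈ Ioo (0 : ℝ) 1) (E : ℝ) (hE : 0 < E) :
    Tendsto
      (fun ε : ℝ =>
        -(1 / (2 * (π : ℂ) * I)) * ∫ E' in Ioi (0 : ℝ), gm m E' / ((E : ℂ) - (E' : ℂ) + I * ε))
      (nhdsWithin 0 (Ioi 0)) (nhds ((m : ℂ) * gm m E)) := by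
  set β : ℂ := betaExp m with hβ
  set c : ℂ := (1 / (2 * (π : ℂ) * (Real.sqrt (m * (1 - m)) : ℂ))) with hc
  have hβre : β.re = -(1/2) := Stmt9Aux.betaExp_re m
  -- closed form for each ε > 0
  have heq : ∀ᶠ ε : ℝ in nhdsWithin 0 (Ioi 0),
      ((1/(2*(π:ℂ)*I)) * c * ((π:ℂ)/Complex.sin ((π:ℂ)*(β+1)))) * ((-(E:ℂ) - I*(ε:ℂ)) ^ β)
      = -(1 / (2 * (π : ℂ) * I)) * ∫ E' in Ioi (0:ℝ), gm m E' / ((E:ℂ) - (E':ℂ) + I * (ε:ℂ)) := by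
    filter_upwards [self_mem_nhdsWithin] with ε (hε : ε ∈ Ioi (0:ℝ))
    set w : ℂ := -(E:ℂ) - I*(ε:ℂ) with hw
    have hwim : w.im = -ε := by simp [hw]
    have hwmem : w ∈ Complex.slitPlane := Or.inr (by rw [hwim]; exact neg_ne_zero.mpr (ne_of_gt hε))
    have h1 : ∀ E' : ℝ, gm m E' / ((E:ℂ) - (E':ℂ) + I*(ε:ℂ))
        = -(c * ((E':ℂ) ^ β / ((E':ℂ) + w))) := by
      intro E'
      have hd : (E:ℂ) - (E':ℂ) + I*(ε:ℂ) = -((E':ℂ) + w) := by rw [hw]; ring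
      rw [gm, hd, div_neg, mul_div_assoc]
    simp_rw [h1]
    rw [integral_neg, MeasureTheory.integral_const_mul]
    rw [show (∫ x in Ioi (0:ℝ), ((x:ℂ) ^ β / ((x:ℂ) + w))) = Stmt9Aux.Bfun β w from rfl]
    rw [Stmt9Aux.Bfun_eq_of_mem hβre hwmem, Stmt9Aux.K_val hβre]
    ring
  -- the limit of the power term
  have hL : Tendsto (fun ε : ℝ => (-(E:ℂ) - I*(ε:ℂ)) ^ β) (nhdsWithin 0 (Ioi 0))
      (nhds (Complex.exp (((Real.log E : ℂ) - (π:ℂ)*I) * β))) := by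
    have hmap : Tendsto (fun ε : ℝ => -(E:ℂ) - I*(ε:ℂ)) (nhdsWithin 0 (Ioi 0))
        (nhdsWithin (-(E:ℂ)) {z : ℂ | z.im < 0}) := by
      rw [tendsto_nhdsWithin_iff]
      constructor
      · have hcont : Continuous fun ε : ℝ => -(E:ℂ) - I*(ε:ℂ) := by continuity
        have h0 := hcont.tendsto' 0 (-(E:ℂ)) (by simp)
        exact h0.mono_left nhdsWithin_le_nhds
      · filter_upwards [self_mem_nhdsWithin] with ε (hε : ε ∈ Ioi (0:ℝ))
        simp only [mem_setOf_eq, Complex.sub_im, Complex.neg_im, Complex.ofReal_im,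
          Complex.mul_im, Complex.I_re, Complex.I_im, Complex.ofReal_re]
        simpa using hε
    have hre : (-(E:ℂ)).re < 0 := by simpa using hE
    have him : (-(E:ℂ)).im = 0 := by simp
    have hlog := (Complex.tendsto_log_nhdsWithin_im_neg_of_re_neg_of_im_zero hre him).comp hmap
    have habs : Real.log ‖-(E:ℂ)‖ = Real.log E := by
      rw [show ‖-(E:ℂ)‖ = E by simp [abs_of_pos hE]]
    rw [habs] at hlog
    have hexp := (Complex.continuous_exp.tendsto _).comp (hlog.mul_const β)
    apply Tendsto.congr' _ hexp
    filter_upwards [self_mem_nhdsWithin] with ε (hε : ε ∈ Ioi (0:ℝ))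
    have hwne : (-(E:ℂ) - I*(ε:ℂ)) ≠ 0 := by
      intro h0
      have : (-(E:ℂ) - I*(ε:ℂ)).im = -ε := by simp
      rw [h0] at this
      have hp : (0:ℝ) < ε := hε
      simp at this
      linarith
    rw [Function.comp_apply, Function.comp_apply, Complex.cpow_def_of_ne_zero hwne]
  -- assemble
  have hfin := hL.const_mul ((1/(2*(π:ℂ)*I)) * c * ((π:ℂ)/Complex.sin ((π:ℂ)*(β+1))))
  have hval : ((1/(2*(π:ℂ)*I)) * c * ((π:ℂ)/Complex.sin ((π:ℂ)*(β+1)))) *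
      Complex.exp (((Real.log E : ℂ) - (π:ℂ)*I) * β) = (m:ℂ) * gm m E := by
    have h := Stmt9Aux.final_id hm hE
    rw [gm]
    calc ((1/(2*(π:ℂ)*I)) * c * ((π:ℂ)/Complex.sin ((π:ℂ)*(β+1)))) *
        Complex.exp (((Real.log E : ℂ) - (π:ℂ)*I) * β)
        = c * ((1/(2*(π:ℂ)*I)) * ((π:ℂ)/Complex.sin ((π:ℂ)*(β+1))) *
            Complex.exp (((Real.log E : ℂ) - (π:ℂ)*I) * β)) := by ring
      _ = c * ((m:ℂ) * (E:ℂ) ^ β) := by rw [h]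
      _ = (m:ℂ) * (c * (E:ℂ) ^ β) := by ring
  rw [hval] at hfin
  exact Tendsto.congr' heq hfin

end
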